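/- For every positive integer n, the polynomial (1-X) divides 1 - T_{n+1}(X), the quotient polynomial q with (1-X)·q(X) = 1 - T_{n+1}(X) has degree n, satisfies q(1) = (n+1)², and satisfies q(x) ≥ 0 for all x ∈ [-1,1]. -/

import Mathlib

/-!
Since `T_{n+1}(1) = 1`, the root `1` of `1 - T_{n+1}` gives the factor `1 - X`. Differentiating
`(1 - X) q = 1 - T_{n+1}` and evaluating at `1` gives `q(1) = T_{n+1}'(1) = (n + 1)²`, and on
`[-1, 1)` the quotient `q(x) = (1 - T_{n+1}(x)) / (1 - x)` is nonnegative because `|T_{n+1}| ≤ 1`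
there.
-/

open Polynomial

namespace Polynomial

section CommRing

variable {R : Type*} [CommRing R] {p q : R[X]}

theorem one_sub_X_dvd_one_sub (hp : p.eval 1 = 1) : (1 - X : R[X]) ∣ 1 - p := by
  have h : X - C 1 ∣ p - C (p.eval 1) := X_sub_C_dvd_sub_C_eval
  rw [hp, C_1] at h
  rw [← neg_sub X, ← neg_sub p]
  exact neg_dvd.mpr (dvd_neg.mpr h)

theorem eval_one_of_one_sub_X_mul_eq (h : (1 - X) * q = 1 - p) :
    q.eval 1 = (derivative p).eval 1 := by
  have h' := congrArg (fun r => (derivative r).eval 1) h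
  simpa [derivative_mul] using h'

theorem natDegree_of_one_sub_X_mul_eq [IsDomain R] {r : R[X]} (h : (1 - X) * q = r)
    (hr : r ≠ 0) : q.natDegree + 1 = r.natDegree := by
  have hq : q ≠ 0 := by rintro rfl; exact hr (by simpa using h.symm)
  have h1X : (1 - X : R[X]).natDegree = 1 := by
    rw [← neg_sub, natDegree_neg, ← C_1, natDegree_X_sub_C]
  rw [← h, natDegree_mul (by rintro h0; simp [h0] at h1X) hq, h1X, add_comm]

theorem eval_nonneg_of_one_sub_X_mul_eq [LinearOrder R] [IsStrictOrderedRing R]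
    (h : (1 - X) * q = 1 - p) {x : R} (hx : x < 1) (hp : p.eval x ≤ 1) : 0 ≤ q.eval x := by
  have hx' := congrArg (eval x) h
  simp only [eval_mul, eval_sub, eval_one, eval_X] at hx'
  exact nonneg_of_mul_nonneg_right (hx' ▸ sub_nonneg.mpr hp) (sub_pos.mpr hx)

end CommRing

end Polynomial

theorem fejer_polynomial_properties
    (n : ℕ) :
    ((1 - Polynomial.X : Polynomial ℝ) ∣ (1 - Polynomial.Chebyshev.T ℝ ((n : ℤ) + 1))) ∧
      ∀ q : Polynomial ℝ,
        (1 - Polynomial.X) * q = 1 - Polynomial.Chebyshev.T ℝ ((n : ℤ) + 1) →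
          q.natDegree = n ∧ q.eval 1 = ((n : ℝ) + 1) ^ 2 ∧
            ∀ x ∈ Set.Icc (-1 : ℝ) 1, 0 ≤ q.eval x := by
  refine ⟨one_sub_X_dvd_one_sub (Chebyshev.T_eval_one ℝ _), fun q hq => ?_⟩
  have hdeg : (1 - Chebyshev.T ℝ ((n : ℤ) + 1)).natDegree = n + 1 := by
    have hT : (Chebyshev.T ℝ ((n : ℤ) + 1)).natDegree = n + 1 := by
      rw [Chebyshev.natDegree_T]; omega
    rw [natDegree_sub_eq_right_of_natDegree_lt (by rw [hT, natDegree_one]; omega), hT]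
  have hq1 : q.eval 1 = ((n : ℝ) + 1) ^ 2 := by
    rw [eval_one_of_one_sub_X_mul_eq hq, Chebyshev.derivative_T_eval_one]
    push_cast; ring
  refine ⟨?_, hq1, fun x hx => ?_⟩
  · have hdegq := natDegree_of_one_sub_X_mul_eq hq (by intro h0; simp [h0] at hdeg)
    omega
  rcases hx.2.lt_or_eq with hlt | rfl
  · exact eval_nonneg_of_one_sub_X_mul_eq hq hlt (Chebyshev.eval_T_real_mem_Icc _ hx).2
  · rw [hq1]; positivity
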